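/- arXiv:2601.10755 — 4 statements merged into one kernel-verified Lean document; each statement's English description precedes it below -/
import Mathlib

section
/- The crossbridge Q_XY meets the octacross O exactly in two crosses: O ∩ Q_XY = C₁ ∪ C₂, where C₁ = {(1,t,0) : |t| ≤ 1/3} ∪ {(1,0,t) : |t| ≤ 1/3} and C₂ = {(t,−1,0) : |t| ≤ 1/3} ∪ {(0,−1,t) : |t| ≤ 1/3}. -/
/-- The octagon `O_XY = ([-1,1]² \ ⋃ D°_{2/3}(±1,±1)) × {0} ⊂ ℝ³`. -/
def OXY : Set (ℝ × ℝ × ℝ) :=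
  {v | |v.1| ≤ 1 ∧ |v.2.1| ≤ 1 ∧ v.2.2 = 0 ∧
       (2/3)^2 ≤ (v.1 - 1)^2 + (v.2.1 - 1)^2 ∧
       (2/3)^2 ≤ (v.1 - 1)^2 + (v.2.1 + 1)^2 ∧
       (2/3)^2 ≤ (v.1 + 1)^2 + (v.2.1 - 1)^2 ∧
       (2/3)^2 ≤ (v.1 + 1)^2 + (v.2.1 + 1)^2}

/-- The cyclic coordinate map `c(x,y,z) = (z,x,y)`. -/
def cyc (v : ℝ × ℝ × ℝ) : ℝ × ℝ × ℝ := (v.2.2, v.1, v.2.1)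

def OYZ : Set (ℝ × ℝ × ℝ) := cyc '' OXY

def OZX : Set (ℝ × ℝ × ℝ) := cyc '' OYZ

/-- The octacross `O = O_XY ∪ O_YZ ∪ O_ZX`. -/
def octacross : Set (ℝ × ℝ × ℝ) := OXY ∪ OYZ ∪ OZX

/-- The annulus `A_XY = (D_{4/3}(1,-1) \ D°_{2/3}(1,-1)) × {0} ⊂ ℝ³`. -/
def AXY : Set (ℝ × ℝ × ℝ) :=
  {v | (2/3)^2 ≤ (v.1 - 1)^2 + (v.2.1 + 1)^2 ∧
       (v.1 - 1)^2 + (v.2.1 + 1)^2 ≤ (4/3)^2 ∧ v.2.2 = 0}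

/-- The cylinder `B_XY = ∂D_1(1,-1) × [-1/3, 1/3]`. -/
def BXY : Set (ℝ × ℝ × ℝ) :=
  {v | (v.1 - 1)^2 + (v.2.1 + 1)^2 = 1 ∧ |v.2.2| ≤ 1/3}

/-- The crossbridge `Q_XY = {(x,y,t) ∈ A_XY ∪ B_XY : max(|x|,|y|) ≥ 1}`. -/
def QXY : Set (ℝ × ℝ × ℝ) :=
  {v ∈ AXY ∪ BXY | 1 ≤ max |v.1| |v.2.1|}

/-- The cross `C₁ = {(1,t,0) : |t| ≤ 1/3} ∪ {(1,0,t) : |t| ≤ 1/3}`. -/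
def cross₁ : Set (ℝ × ℝ × ℝ) :=
  {v | ∃ t : ℝ, |t| ≤ 1/3 ∧ (v = (1, t, 0) ∨ v = (1, 0, t))}

/-- The cross `C₂ = {(t,-1,0) : |t| ≤ 1/3} ∪ {(0,-1,t) : |t| ≤ 1/3}`. -/
def cross₂ : Set (ℝ × ℝ × ℝ) :=
  {v | ∃ t : ℝ, |t| ≤ 1/3 ∧ (v = (t, -1, 0) ∨ v = (0, -1, t))}

/-!
The octacross lies in the cube `[-1,1]³`, and a point of the crossbridge has `max(|x|,|y|) ≥ 1`
and horizontal squared distance from `(1,-1)` in `[(2/3)², (4/3)²]`. On the boundary of the square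
`[-1,1]²` this leaves only `x = 1, |y| ≤ 1/3` or `y = -1, |x| ≤ 1/3`. The plane of the octacross
containing the point then fixes the third coordinate (`z = 0` in `O_XY`, `x = 0` in `O_YZ`,
`y = 0` in `O_ZX`), and `|z| ≤ 1/3` holds throughout `A_XY ∪ B_XY`.
-/

open Set

lemma mem_OYZ {v : ℝ × ℝ × ℝ} : v ∈ OYZ ↔ (v.2.1, v.2.2, v.1) ∈ OXY := by
  constructor
  · rintro ⟨u, hu, rfl⟩
    exact hu
  · intro h
    exact ⟨(v.2.1, v.2.2, v.1), h, rfl⟩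

lemma mem_OZX {v : ℝ × ℝ × ℝ} : v ∈ OZX ↔ (v.2.2, v.1, v.2.1) ∈ OXY := by
  constructor
  · rintro ⟨u, hu, rfl⟩
    exact mem_OYZ.mp hu
  · intro h
    exact ⟨(v.2.1, v.2.2, v.1), mem_OYZ.mpr h, rfl⟩

lemma abs_le_one_of_mem_octacross {x y z : ℝ} (hv : (x, y, z) ∈ octacross) :
    |x| ≤ 1 ∧ |y| ≤ 1 ∧ |z| ≤ 1 := by
  rcases hv with (⟨hx, hy, hz, -⟩ | hv) | hv
  · exact ⟨hx, hy, by simp [show z = 0 from hz]⟩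
  · obtain ⟨hy, hz, hx, -⟩ := mem_OYZ.mp hv
    exact ⟨by simp [show x = 0 from hx], hy, hz⟩
  · obtain ⟨hz, hx, hy, -⟩ := mem_OZX.mp hv
    exact ⟨hx, by simp [show y = 0 from hy], hz⟩

lemma sq_dist_mem_Icc_of_mem_AXY_union_BXY {v : ℝ × ℝ × ℝ} (hv : v ∈ AXY ∪ BXY) :
    (v.1 - 1)^2 + (v.2.1 + 1)^2 ∈ Icc ((2/3)^2) ((4/3)^2) := by
  rcases hv with ⟨h₁, h₂, -⟩ | ⟨h, -⟩
  · exact ⟨h₁, h₂⟩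
  · rw [h]
    norm_num

lemma abs_le_of_mem_AXY_union_BXY {v : ℝ × ℝ × ℝ} (hv : v ∈ AXY ∪ BXY) :
    |v.2.2| ≤ 1/3 := by
  rcases hv with ⟨-, -, hz⟩ | ⟨-, hz⟩
  · rw [hz]
    norm_num
  · exact hz

lemma eq_one_or_eq_neg_one_of_sq_dist_mem_Icc {x y : ℝ} (hx : |x| ≤ 1) (hy : |y| ≤ 1)
    (hmax : 1 ≤ max |x| |y|) (hr : (x - 1)^2 + (y + 1)^2 ∈ Icc ((2/3)^2) ((4/3)^2)) :
    (x = 1 ∧ |y| ≤ 1/3) ∨ (y = -1 ∧ |x| ≤ 1/3) := by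
  obtain ⟨hr₁, hr₂⟩ := hr
  rw [abs_le] at hx hy
  rcases le_max_iff.mp hmax with h | h <;> rcases le_abs.mp h with h | h
  · obtain rfl : x = 1 := le_antisymm hx.2 h
    exact Or.inl ⟨rfl, abs_le.mpr ⟨by nlinarith, by nlinarith⟩⟩
  · nlinarith
  · nlinarith
  · obtain rfl : y = -1 := le_antisymm (by linarith) hy.1
    exact Or.inr ⟨rfl, abs_le.mpr ⟨by nlinarith, by nlinarith⟩⟩

lemma sq_sub_one_mem_Icc_and_sq_add_one_mem_Icc {t : ℝ} (ht : |t| ≤ 1/3) :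
    (t - 1)^2 ∈ Icc ((2/3)^2) ((4/3)^2) ∧ (t + 1)^2 ∈ Icc ((2/3)^2) ((4/3)^2) := by
  rw [abs_le] at ht
  refine ⟨⟨?_, ?_⟩, ?_, ?_⟩ <;> nlinarith

lemma mem_OXY_of_abs_eq_one {s t : ℝ} (hs : |s| = 1) (ht : |t| ≤ 1/3) :
    (s, t, 0) ∈ OXY ∧ (t, s, 0) ∈ OXY := by
  obtain ⟨⟨h₁, -⟩, h₂, -⟩ := sq_sub_one_mem_Icc_and_sq_add_one_mem_Icc ht
  have ht₁ : |t| ≤ 1 := ht.trans (by norm_num)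
  rcases (abs_eq zero_le_one).mp hs with rfl | rfl <;>
    exact ⟨⟨hs.le, ht₁, rfl, by nlinarith, by nlinarith, by nlinarith, by nlinarith⟩,
      ⟨ht₁, hs.le, rfl, by nlinarith, by nlinarith, by nlinarith, by nlinarith⟩⟩

lemma octacross_inter_QXY_subset : octacross ∩ QXY ⊆ cross₁ ∪ cross₂ := by
  rintro ⟨x, y, z⟩ ⟨hO, hAB, hmax⟩
  obtain ⟨hx, hy, -⟩ := abs_le_one_of_mem_octacross hO
  rcases eq_one_or_eq_neg_one_of_sq_dist_mem_Icc hx hy hmax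
    (sq_dist_mem_Icc_of_mem_AXY_union_BXY hAB) with ⟨rfl, hy⟩ | ⟨rfl, hx⟩
  · rcases hO with (hO | hO) | hO
    · obtain rfl : z = 0 := hO.2.2.1
      exact Or.inl ⟨y, hy, Or.inl rfl⟩
    · exact absurd (mem_OYZ.mp hO).2.2.1 one_ne_zero
    · obtain rfl : y = 0 := (mem_OZX.mp hO).2.2.1
      exact Or.inl ⟨z, abs_le_of_mem_AXY_union_BXY hAB, Or.inr rfl⟩
  · rcases hO with (hO | hO) | hO
    · obtain rfl : z = 0 := hO.2.2.1
      exact Or.inr ⟨x, hx, Or.inl rfl⟩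
    · obtain rfl : x = 0 := (mem_OYZ.mp hO).2.2.1
      exact Or.inr ⟨z, abs_le_of_mem_AXY_union_BXY hAB, Or.inr rfl⟩
    · exact absurd (mem_OZX.mp hO).2.2.1 (by norm_num)

lemma cross₁_subset_octacross_inter_QXY : cross₁ ⊆ octacross ∩ QXY := by
  rintro _ ⟨t, ht, rfl | rfl⟩
  · obtain ⟨-, h⟩ := sq_sub_one_mem_Icc_and_sq_add_one_mem_Icc ht
    refine ⟨Or.inl (Or.inl (mem_OXY_of_abs_eq_one abs_one ht).1), Or.inl ⟨?_, ?_, rfl⟩, ?_⟩ <;>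
      simp_all
  · refine ⟨Or.inr (mem_OZX.mpr (mem_OXY_of_abs_eq_one abs_one ht).2), Or.inr ⟨?_, ht⟩, ?_⟩ <;>
      norm_num

lemma cross₂_subset_octacross_inter_QXY : cross₂ ⊆ octacross ∩ QXY := by
  rintro _ ⟨t, ht, rfl | rfl⟩
  · obtain ⟨h, -⟩ := sq_sub_one_mem_Icc_and_sq_add_one_mem_Icc ht
    refine ⟨Or.inl (Or.inl (mem_OXY_of_abs_eq_one (by norm_num) ht).2),
      Or.inl ⟨?_, ?_, rfl⟩, ?_⟩ <;> simp_all
  · refine ⟨Or.inl (Or.inr (mem_OYZ.mpr (mem_OXY_of_abs_eq_one (by norm_num) ht).1)),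
      Or.inr ⟨?_, ht⟩, ?_⟩ <;> norm_num

/-- the crossbridge `Q_XY` meets the octacross `O` exactly in the
two crosses `C₁ ∪ C₂`. -/
theorem octacross_inter_crossbridge :
    octacross ∩ QXY = cross₁ ∪ cross₂ :=
  octacross_inter_QXY_subset.antisymm
    (union_subset cross₁_subset_octacross_inter_QXY cross₂_subset_octacross_inter_QXY)
end

section
/- The immersed Möbius band M is invariant under both the order-3 rotation c(x,y,z) = (z,x,y) and the order-2 rotation τ(x,y,z) = (−y,−x,−z); that is, c(M) = M and τ(M) = M (so M is invariant under a rotation group of order 6). -/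
def QYZ : Set (ℝ × ℝ × ℝ) := cyc '' QXY

def QZX : Set (ℝ × ℝ × ℝ) := cyc '' QYZ

/-- The disk `D_XY = D_{2/3}(1,-1) × {0}`. -/
def DXY : Set (ℝ × ℝ × ℝ) :=
  {v | (v.1 - 1)^2 + (v.2.1 + 1)^2 ≤ (2/3)^2 ∧ v.2.2 = 0}

def DYZ : Set (ℝ × ℝ × ℝ) := cyc '' DXY

def DZX : Set (ℝ × ℝ × ℝ) := cyc '' DYZ

/-- The immersed Moebius band `M`. -/
def mob : Set (ℝ × ℝ × ℝ) := octacross ∪ QXY ∪ QYZ ∪ QZX ∪ DXY ∪ DYZ ∪ DZX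

/-- The order-2 rotation `τ(x,y,z) = (-y,-x,-z)`. -/
def τ (v : ℝ × ℝ × ℝ) : ℝ × ℝ × ℝ := (-v.2.1, -v.1, -v.2.2)

/-! Each of the three families `O, Q, D` is the `c`-orbit `S ∪ c(S) ∪ c²(S)` of its `XY` piece,
so `c` permutes it because `c³ = id`. The rotation `τ` maps each `XY` piece to itself (it swaps
the corners `(1,1)` and `(-1,-1)` and fixes `(1,-1)`), and `τ ∘ c = c² ∘ τ`, so `τ` also maps
each orbit to itself, exchanging its `YZ` and `ZX` pieces. -/

open Function Set

section Orbit3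

variable {α : Type*} {f g : α → α}

def orbit3 (f : α → α) (s : Set α) : Set α := s ∪ f '' s ∪ f '' (f '' s)

theorem image_image_image_of_cube_eq_id (hf : ∀ x, f (f (f x)) = x) (s : Set α) :
    f '' (f '' (f '' s)) = s := by
  simp only [image_image, hf, image_id']

theorem image_orbit3 (hf : ∀ x, f (f (f x)) = x) (s : Set α) :
    f '' orbit3 f s = orbit3 f s := by
  simp only [orbit3, image_union, image_image_image_of_cube_eq_id hf]
  rw [union_comm, ← union_assoc]

theorem image_orbit3_of_semiconj (hf : ∀ x, f (f (f x)) = x) (hg : Semiconj g f (f ∘ f))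
    {s : Set α} (hs : g '' s = s) : g '' orbit3 f s = orbit3 f s := by
  have hgf : ∀ t, g '' (f '' t) = f '' (f '' (g '' t)) := fun t => by
    rw [hg.set_image t, image_comp]
  have hgff : g '' (f '' (f '' s)) = f '' s := by
    rw [hgf, hgf, hs, image_image_image_of_cube_eq_id hf]
  rw [orbit3, image_union, image_union, hs, hgff, hgf, hs, union_right_comm]

theorem Function.Involutive.image_eq_of_mapsTo (hg : Involutive g) {s : Set α}
    (hs : MapsTo g s s) : g '' s = s :=
  hs.image_subset.antisymm (congrFun hg.image_eq_preimage_symm s ▸ hs)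

end Orbit3

theorem cyc_cyc_cyc (v : ℝ × ℝ × ℝ) : cyc (cyc (cyc v)) = v := rfl

theorem τ_involutive : Involutive τ := fun v => by simp [τ]

theorem τ_semiconj_cyc : Semiconj τ cyc (cyc ∘ cyc) := fun _ => rfl

theorem mob_eq_union_orbit3 : mob = orbit3 cyc OXY ∪ orbit3 cyc QXY ∪ orbit3 cyc DXY := by
  ext v
  simp only [mob, octacross, orbit3, OYZ, OZX, QYZ, QZX, DYZ, DZX, mem_union]
  tauto

theorem mapsTo_τ_OXY : MapsTo τ OXY OXY := by
  rintro ⟨x, y, z⟩ ⟨hx, hy, hz, hpp, hpm, hmp, hmm⟩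
  simp only [τ, OXY, mem_ofPred_eq, abs_neg, neg_eq_zero] at *
  refine ⟨hy, hx, hz, ?_, ?_, ?_, ?_⟩ <;> linarith

theorem mapsTo_τ_AXY : MapsTo τ AXY AXY := by
  rintro ⟨x, y, z⟩ ⟨hin, hout, hz⟩
  simp only [τ, AXY, mem_ofPred_eq, neg_eq_zero] at *
  exact ⟨by linarith, by linarith, hz⟩

theorem mapsTo_τ_BXY : MapsTo τ BXY BXY := by
  rintro ⟨x, y, z⟩ ⟨hr, hz⟩
  simp only [τ, BXY, mem_ofPred_eq, abs_neg] at *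
  exact ⟨by linarith, hz⟩

theorem mapsTo_τ_QXY : MapsTo τ QXY QXY := by
  rintro v ⟨hAB, hmax⟩
  refine ⟨hAB.imp (fun h => mapsTo_τ_AXY h) (fun h => mapsTo_τ_BXY h), ?_⟩
  simpa only [τ, abs_neg, max_comm] using hmax

theorem mapsTo_τ_DXY : MapsTo τ DXY DXY := by
  rintro ⟨x, y, z⟩ ⟨hr, hz⟩
  simp only [τ, DXY, mem_ofPred_eq, neg_eq_zero] at *
  exact ⟨by linarith, hz⟩

/-- the immersed Moebius band `M` is invariant under the order-3
rotation `c` and the order-2 rotation `τ`, hence under a rotation group of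
order 6. -/
theorem mob_symmetry : cyc '' mob = mob ∧ τ '' mob = mob := by
  have hτ : ∀ {s}, MapsTo τ s s → τ '' orbit3 cyc s = orbit3 cyc s := fun hs =>
    image_orbit3_of_semiconj cyc_cyc_cyc τ_semiconj_cyc (τ_involutive.image_eq_of_mapsTo hs)
  rw [mob_eq_union_orbit3]
  simp only [image_union, image_orbit3 cyc_cyc_cyc, hτ mapsTo_τ_OXY, hτ mapsTo_τ_QXY,
    hτ mapsTo_τ_DXY, and_self]
end

section
/- The planar piece M_XY = O_XY ∪ {(x,y,z) ∈ A_XY : max(|x|,|y|) ≥ 1} ∪ D_XY is a topological rectangle: it is homeomorphic to the closed unit disk in ℝ². -/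
/-- The planar piece `M_XY`: the intersection of the Moebius band `M` with the
`XY`-plane. -/
def MXY : Set (ℝ × ℝ × ℝ) :=
  OXY ∪ {v ∈ AXY | 1 ≤ max |v.1| |v.2.1|} ∪ DXY

/-!
Forgetting its vanishing `z`-coordinate, `M_XY` is a compact planar region which is star-shaped
with respect to every point of the disk of radius `1/10` about the origin. For such a region `S`
the Minkowski gauge is Lipschitz, so the radial rescaling `x ↦ (gauge S x / ‖x‖) • x` is a
homeomorphism of the plane carrying `S` onto the closed unit disk.
-/

open Metric Set Filter Topology Bornology

section TVS

variable {E : Type*} [AddCommGroup E] [Module ℝ E] [TopologicalSpace E] [ContinuousSMul ℝ E]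
  {s : Set E} {x : E}

theorem gauge_le_one_iff_mem_of_isClosed (hsc : IsClosed s) (hs₀ : StarConvex ℝ 0 s)
    (hsa : Absorbent ℝ s) : gauge s x ≤ 1 ↔ x ∈ s := by
  refine ⟨fun h => ?_, gauge_le_one_of_mem⟩
  have hr : ∀ᶠ r : ℝ in 𝓝[<] 1, r • x ∈ s := by
    filter_upwards [Ico_mem_nhdsLT one_pos] with r ⟨hr₀, hr₁⟩
    have hlt : gauge s (r • x) < 1 := by
      rw [gauge_smul_of_nonneg hr₀, smul_eq_mul]
      exact mul_lt_one_of_nonneg_of_lt_one_left hr₀ hr₁ h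
    obtain ⟨b, hb₀, hb₁, z, hz, hzx⟩ := exists_lt_of_gauge_lt hsa hlt
    rw [← hzx]
    exact starConvex_zero_iff.1 hs₀ hz hb₀.le hb₁.le
  have hlim : Tendsto (fun r : ℝ => r • x) (𝓝[<] 1) (𝓝 x) :=
    ((continuous_id.smul continuous_const).tendsto' (1 : ℝ) x (one_smul ℝ x)).mono_left
      inf_le_left
  exact hsc.mem_of_tendsto hlim hr

variable [T1Space E]

theorem continuous_gaugeRescale_of_continuous_gauge {t : Set E} (hs : Continuous (gauge s))
    (ht : Continuous (gauge t)) (ht₀ : t ∈ 𝓝 0) (htb : IsVonNBounded ℝ t) :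
    Continuous (gaugeRescale s t) := by
  have hta : Absorbent ℝ t := absorbent_nhds_zero ht₀
  refine continuous_iff_continuousAt.2 fun x ↦ ?_
  rcases eq_or_ne x 0 with rfl | hx
  · rw [ContinuousAt, gaugeRescale_zero]
    nth_rewrite 2 [← comap_gauge_nhds_zero htb ht₀]
    simp only [tendsto_comap_iff, Function.comp_def, gauge_gaugeRescale _ hta htb]
    exact hs.tendsto' 0 0 gauge_zero
  · exact (hs.continuousAt.div ht.continuousAt ((gauge_pos hta htb).2 hx).ne').smul
      continuousAt_id

end TVS

section Normed

variable {E : Type*} [NormedAddCommGroup E] [NormedSpace ℝ E] {s : Set E} {ε : ℝ}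

theorem gauge_add_le_of_starConvex (hε : 0 < ε)
    (hs : ∀ y ∈ closedBall (0 : E) ε, StarConvex ℝ y s) (hsa : Absorbent ℝ s) (x h : E) :
    gauge s (x + h) ≤ gauge s x + ‖h‖ / ε := by
  rcases eq_or_ne h 0 with rfl | hh
  · simp
  refine le_of_forall_gt_imp_ge_of_dense fun c hc => ?_
  obtain ⟨b, hb₀, hbc, z, hz, rfl⟩ :=
    exists_lt_of_gauge_lt hsa (show gauge s x < c - ‖h‖ / ε by linarith)
  have hh₀ : 0 < ‖h‖ := norm_pos_iff.2 hh
  set r := b + ‖h‖ / ε with hr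
  have hr₀ : 0 < r := by positivity
  -- `b • z + h` is `r` times a point of the segment from `y` to `z`, where `‖y‖ = ε`
  set y : E := (ε / ‖h‖) • h
  have hy : y ∈ closedBall (0 : E) ε := by
    rw [mem_closedBall_zero_iff, norm_smul, Real.norm_of_nonneg (by positivity),
      div_mul_cancel₀ _ hh₀.ne']
  have hmem : (‖h‖ / (ε * r)) • y + (b / r) • z ∈ s :=
    hs y hy hz (by positivity) (by positivity) (by rw [hr]; field_simp; ring)
  refine (gauge_le_of_mem hr₀.le ⟨_, hmem, ?_⟩).trans (by linarith)
  simp only [y, smul_add, smul_smul]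
  field_simp
  rw [one_smul, add_comm]

theorem lipschitzWith_gauge_of_starConvex (hε : 0 < ε)
    (hs : ∀ y ∈ closedBall (0 : E) ε, StarConvex ℝ y s) (hsa : Absorbent ℝ s) :
    LipschitzWith (Real.toNNReal ε⁻¹) (gauge s) :=
  LipschitzWith.of_le_add_mul' _ fun x y => by
    simpa [dist_eq_norm, div_eq_inv_mul] using gauge_add_le_of_starConvex hε hs hsa y (x - y)

theorem nonempty_homeomorph_closedBall_of_starConvex (hsc : IsClosed s) (hsb : IsBounded s)
    (hne : s.Nonempty) (hε : 0 < ε) (hs : ∀ y ∈ closedBall (0 : E) ε, StarConvex ℝ y s) :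
    Nonempty (s ≃ₜ closedBall (0 : E) 1) := by
  have hs₀ : s ∈ 𝓝 0 :=
    mem_of_superset (closedBall_mem_nhds 0 hε) fun y hy => (hs y hy).mem hne
  have hsa : Absorbent ℝ s := absorbent_nhds_zero hs₀
  have hsb' := (NormedSpace.isVonNBounded_iff ℝ).2 hsb
  have ht₀ : closedBall (0 : E) 1 ∈ 𝓝 0 := closedBall_mem_nhds 0 one_pos
  have htb := (NormedSpace.isVonNBounded_iff ℝ).2 (isBounded_closedBall (x := (0 : E)) (r := 1))
  have hgs := (lipschitzWith_gauge_of_starConvex hε hs hsa).continuous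
  have hgt : gauge (closedBall (0 : E) 1) = norm := funext fun x => by
    rw [gauge_closedBall zero_le_one, div_one]
  have hgt' : Continuous (gauge (closedBall (0 : E) 1)) := hgt ▸ continuous_norm
  let e : E ≃ₜ E :=
    { gaugeRescaleEquiv s _ hsa hsb' (absorbent_nhds_zero ht₀) htb with
      continuous_toFun := continuous_gaugeRescale_of_continuous_gauge hgs hgt' ht₀ htb
      continuous_invFun := continuous_gaugeRescale_of_continuous_gauge hgt' hgs hs₀ hsb' }
  refine ⟨e.subtype fun x => ?_⟩
  rw [← gauge_le_one_iff_mem_of_isClosed hsc (hs 0 (mem_closedBall_self hε.le)) hsa,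
    ← gauge_gaugeRescale s (absorbent_nhds_zero ht₀) htb, hgt]
  exact mem_closedBall_zero_iff.symm

end Normed

theorem sq_add_sq_convexComb_le {u₁ u₂ v₁ v₂ r μ ν : ℝ} (hu : u₁^2 + u₂^2 ≤ r)
    (hv : v₁^2 + v₂^2 ≤ r) (hμ : 0 ≤ μ) (hν : 0 ≤ ν) (hμν : μ + ν = 1) :
    (μ * u₁ + ν * v₁)^2 + (μ * u₂ + ν * v₂)^2 ≤ r := by
  obtain rfl : ν = 1 - μ := by linarith
  nlinarith [mul_le_mul_of_nonneg_left hu hμ, mul_le_mul_of_nonneg_left hv hν,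
    mul_nonneg (mul_nonneg hμ hν) (add_nonneg (sq_nonneg (u₁ - v₁)) (sq_nonneg (u₂ - v₂)))]

namespace MXY

def CutSquare (x y : ℝ) : Prop :=
  |x| ≤ 1 ∧ |y| ≤ 1 ∧ (2/3)^2 ≤ (x - 1)^2 + (y - 1)^2 ∧ (2/3)^2 ≤ (x + 1)^2 + (y - 1)^2 ∧
    (2/3)^2 ≤ (x + 1)^2 + (y + 1)^2

def CornerBump (x y : ℝ) : Prop :=
  (x - 1)^2 + (y + 1)^2 ≤ (4/3)^2 ∧ 1 ≤ max |x| |y|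

theorem mem_iff {x y z : ℝ} : (x, y, z) ∈ MXY ↔ z = 0 ∧ (CutSquare x y ∨ CornerBump x y) := by
  simp only [MXY, OXY, AXY, DXY, CutSquare, CornerBump, mem_union, mem_ofPred_eq]
  constructor
  · rintro ((⟨hx, hy, hz, h₁, -, h₂, h₃⟩ | ⟨⟨-, hd, hz⟩, hm⟩) | ⟨hd, hz⟩)
    · exact ⟨hz, .inl ⟨hx, hy, h₁, h₂, h₃⟩⟩
    · exact ⟨hz, .inr ⟨hd, hm⟩⟩
    · refine ⟨hz, ?_⟩
      rcases le_or_gt 1 (max |x| |y|) with hm | hm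
      · exact .inr ⟨hd.trans (by norm_num), hm⟩
      · obtain ⟨hx, hy⟩ := max_lt_iff.1 hm
        -- the small disk at `(1,-1)` lies in `y ≤ -1/3` and `x ≥ 1/3`, far from the other corners
        have : y ≤ -1/3 := by nlinarith [sq_nonneg (x - 1)]
        have : 1/3 ≤ x := by nlinarith [sq_nonneg (y + 1)]
        exact .inl ⟨hx.le, hy.le, by nlinarith, by nlinarith, by nlinarith⟩
  · rintro ⟨hz, ⟨hx, hy, h₁, h₂, h₃⟩ | ⟨hd, hm⟩⟩ <;>
      rcases le_or_gt ((2/3)^2) ((x - 1)^2 + (y + 1)^2) with h₄ | h₄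
    · exact .inl (.inl ⟨hx, hy, hz, h₁, h₄, h₂, h₃⟩)
    · exact .inr ⟨h₄.le, hz⟩
    · exact .inl (.inr ⟨⟨h₄, hd, hz⟩, hm⟩)
    · exact .inr ⟨h₄.le, hz⟩

theorem le_corner_sq_dist_convexComb {a b px py μ ν : ℝ} (ha : |a| ≤ 1/10) (hb : |b| ≤ 1/10)
    (hpx : px ≤ 1) (hpy : py ≤ 1) (hp : (2/3)^2 ≤ (px - 1)^2 + (py - 1)^2)
    (hμ : 0 ≤ μ) (hν : 0 ≤ ν) (hμν : μ + ν = 1) :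
    (2/3)^2 ≤ (μ * a + ν * px - 1)^2 + (μ * b + ν * py - 1)^2 := by
  obtain ⟨ha₁, ha₂⟩ := abs_le.1 ha
  obtain ⟨hb₁, hb₂⟩ := abs_le.1 hb
  rcases le_or_gt px (1/5) with hx | hx
  · have : μ * a + ν * px ≤ 1/5 := convex_Iic (1/5 : ℝ) (by simp; linarith) hx hμ hν hμν
    nlinarith [sq_nonneg (μ * b + ν * py - 1)]
  rcases le_or_gt py (1/5) with hy | hy
  · have : μ * b + ν * py ≤ 1/5 := convex_Iic (1/5 : ℝ) (by simp; linarith) hy hμ hν hμν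
    nlinarith [sq_nonneg (μ * a + ν * px - 1)]
  -- `(p - c) ⬝ (p - y) ≤ 0` for the corner `c = (1,1)`, so the distance to `c` grows from `p`
  -- towards `y`
  obtain rfl : μ = 1 - ν := by linarith
  have h₁ : (px - 1) * (px - a) ≤ 0 := mul_nonpos_of_nonpos_of_nonneg (by linarith) (by linarith)
  have h₂ : (py - 1) * (py - b) ≤ 0 := mul_nonpos_of_nonpos_of_nonneg (by linarith) (by linarith)
  nlinarith [mul_nonneg hμ (neg_nonneg.2 (add_nonpos h₁ h₂)),
    sq_nonneg ((1 - ν) * (px - a)), sq_nonneg ((1 - ν) * (py - b))]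

theorem bump_sq_dist_convexComb_le_of_one_le {a b px py μ ν : ℝ} (ha : a ≤ 1) (hb : |b| ≤ 1/10)
    (hp : (px - 1)^2 + (py + 1)^2 ≤ (4/3)^2) (hq : 1 ≤ μ * a + ν * px)
    (hμ : 0 ≤ μ) (hν : 0 ≤ ν) (hμν : μ + ν = 1) :
    (μ * a + ν * px - 1)^2 + (μ * b + ν * py + 1)^2 ≤ (4/3)^2 := by
  -- compare with the convex combination of `p` and `(1, b)`, which has the same height
  -- and lies farther to the right
  have hdisk := sq_add_sq_convexComb_le (u₁ := 0) (u₂ := b + 1) (v₁ := px - 1) (v₂ := py + 1)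
    (by nlinarith [abs_le.1 hb]) hp hμ hν hμν
  have hx : μ * a + ν * px - 1 ≤ μ * 0 + ν * (px - 1) := by nlinarith
  have hy : μ * b + ν * py + 1 = μ * (b + 1) + ν * (py + 1) := by linear_combination -hμν
  rw [hy]
  nlinarith

theorem CutSquare.convexComb {a b px py μ ν : ℝ} (ha : |a| ≤ 1/10) (hb : |b| ≤ 1/10)
    (hp : CutSquare px py) (hμ : 0 ≤ μ) (hν : 0 ≤ ν) (hμν : μ + ν = 1) :
    CutSquare (μ * a + ν * px) (μ * b + ν * py) := by
  obtain ⟨hx, hy, h₁, h₂, h₃⟩ := hp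
  have hsq {c d : ℝ} (hc : |c| ≤ 1/10) (hd : |d| ≤ 1) : |μ * c + ν * d| ≤ 1 :=
    abs_le.2 (convex_Icc (-1 : ℝ) 1 (abs_le.1 (hc.trans (by norm_num))) (abs_le.1 hd) hμ hν hμν)
  have ha' : |-a| ≤ 1/10 := by rwa [abs_neg]
  have hb' : |-b| ≤ 1/10 := by rwa [abs_neg]
  obtain ⟨hx₁, hx₂⟩ := abs_le.1 hx
  obtain ⟨hy₁, hy₂⟩ := abs_le.1 hy
  refine ⟨hsq ha hx, hsq hb hy, le_corner_sq_dist_convexComb ha hb hx₂ hy₂ h₁ hμ hν hμν, ?_, ?_⟩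
  · linear_combination le_corner_sq_dist_convexComb ha' hb (neg_le.2 hx₁) hy₂
      (by linear_combination h₂) hμ hν hμν
  · linear_combination le_corner_sq_dist_convexComb ha' hb' (neg_le.2 hx₁) (neg_le.2 hy₁)
      (by linear_combination h₃) hμ hν hμν

theorem CornerBump.convexComb {a b px py μ ν : ℝ} (ha : |a| ≤ 1/10) (hb : |b| ≤ 1/10)
    (hp : CornerBump px py) (hμ : 0 ≤ μ) (hν : 0 ≤ ν) (hμν : μ + ν = 1) :
    CutSquare (μ * a + ν * px) (μ * b + ν * py) ∨
      CornerBump (μ * a + ν * px) (μ * b + ν * py) := by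
  obtain ⟨hd, -⟩ := hp
  obtain ⟨ha₁, ha₂⟩ := abs_le.1 ha
  obtain ⟨hb₁, hb₂⟩ := abs_le.1 hb
  have hpx := abs_le_of_sq_le_sq' (by nlinarith [sq_nonneg (py + 1)] : (px - 1)^2 ≤ (4/3)^2)
    (by norm_num)
  have hpy := abs_le_of_sq_le_sq' (by nlinarith [sq_nonneg (px - 1)] : (py + 1)^2 ≤ (4/3)^2)
    (by norm_num)
  have hqx : -(1/3) ≤ μ * a + ν * px :=
    convex_Ici (-(1/3) : ℝ) (by simp; linarith) (by simp; linarith) hμ hν hμν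
  have hqy : μ * b + ν * py ≤ 1/3 :=
    convex_Iic (1/3 : ℝ) (by simp; linarith) (by simp; linarith) hμ hν hμν
  by_cases hx : 1 ≤ μ * a + ν * px
  · exact .inr ⟨bump_sq_dist_convexComb_le_of_one_le (by linarith) hb hd hx hμ hν hμν,
      le_max_of_le_left (hx.trans (le_abs_self _))⟩
  by_cases hy : μ * b + ν * py ≤ -1
  · -- the reflection `(x, y) ↦ (-y, -x)` fixes the corner `(1,-1)` and swaps the two cases
    refine .inr ⟨?_, le_max_of_le_right (le_abs.2 (.inr (by linarith)))⟩
    linear_combination bump_sq_dist_convexComb_le_of_one_le (a := -b) (b := -a) (px := -py)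
      (py := -px) (by linarith) (by rwa [abs_neg]) (by linear_combination hd) (by linarith)
      hμ hν hμν
  · exact .inl ⟨abs_le.2 ⟨by linarith, by linarith⟩, abs_le.2 ⟨by linarith, by linarith⟩,
      by nlinarith, by nlinarith, by nlinarith⟩

def planar : Set (EuclideanSpace ℝ (Fin 2)) :=
  {w | CutSquare (w 0) (w 1) ∨ CornerBump (w 0) (w 1)}

def homeomorphPlanar : MXY ≃ₜ planar where
  toFun v := ⟨!₂[v.1.1, v.1.2.1], by simpa [planar] using (mem_iff.1 v.2).2⟩
  invFun w := ⟨(w.1 0, w.1 1, 0), mem_iff.2 ⟨rfl, w.2⟩⟩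
  left_inv := by
    rintro ⟨⟨x, y, z⟩, hv⟩
    obtain rfl := (mem_iff.1 hv).1
    simp
  right_inv w := by
    ext i
    fin_cases i <;> simp
  continuous_toFun := by fun_prop
  continuous_invFun := by fun_prop

theorem isClosed_planar : IsClosed planar := by
  simp only [planar, CutSquare, CornerBump, ofPred_or, ofPred_and]
  refine .union (.inter ?_ (.inter ?_ (.inter ?_ (.inter ?_ ?_)))) (.inter ?_ ?_) <;>
    exact isClosed_le (by fun_prop) (by fun_prop)

theorem isBounded_planar : Bornology.IsBounded planar := by
  refine (isBounded_closedBall (x := 0) (r := 4)).subset fun w hw => ?_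
  rw [EuclideanSpace.closedBall_zero_eq _ (by norm_num), mem_ofPred_eq, Fin.sum_univ_two]
  rcases hw with ⟨hx, hy, -⟩ | ⟨hd, -⟩
  · nlinarith [abs_le.1 hx, abs_le.1 hy]
  · nlinarith [sq_nonneg (w 0 - 2), sq_nonneg (w 1 + 2)]

theorem starConvex_planar {y : EuclideanSpace ℝ (Fin 2)} (hy : y ∈ closedBall 0 (1/10)) :
    StarConvex ℝ y planar := by
  have hcoord (i : Fin 2) : |y i| ≤ 1/10 :=
    (PiLp.norm_apply_le y i).trans (mem_closedBall_zero_iff.1 hy)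
  intro p hp μ ν hμ hν hμν
  simp only [planar, mem_ofPred_eq, PiLp.add_apply, PiLp.smul_apply, smul_eq_mul] at hp ⊢
  rcases hp with hp | hp
  · exact .inl (hp.convexComb (hcoord 0) (hcoord 1) hμ hν hμν)
  · exact hp.convexComb (hcoord 0) (hcoord 1) hμ hν hμν

end MXY

/-- `M_XY` is a topological rectangle: it is homeomorphic to the
closed unit disk in `ℝ²`. -/
theorem MXY_homeomorph_disk :
    Nonempty (MXY ≃ₜ (Metric.closedBall (0 : EuclideanSpace ℝ (Fin 2)) 1)) := by
  obtain ⟨e⟩ := nonempty_homeomorph_closedBall_of_starConvex MXY.isClosed_planar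
    MXY.isBounded_planar ⟨0, .inl (by norm_num [MXY.CutSquare])⟩ (by norm_num : (0 : ℝ) < 1/10)
    fun _ => MXY.starConvex_planar
  exact ⟨MXY.homeomorphPlanar.trans e⟩
end

section
/- The complement of Ω in the 3-sphere is also a topological ball: in the one-point compactification ℝ³ ∪ {∞}, the set ((ℝ³ ∪ {∞}) \ interior(Ω)) is homeomorphic to the closed unit ball of ℝ³, where interior(Ω) is the topological interior of Ω in ℝ³. -/
/-!
The three slabs are boxes containing the origin in their interiors, so `Ω` is star-shaped about
`0` with continuous gauge `gaugeΩ = min` of the three box gauges: `Ω = {gaugeΩ ≤ 1}` and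
`interior Ω = {gaugeΩ < 1}`. For a linear isomorphism `L` onto Euclidean `ℝ³`, the inversion
`v ↦ v / (‖L v‖ * gaugeΩ v)` is an involution of `ℝ³ \ {0}` exchanging `{gaugeΩ ≥ 1}` with
`{0 < ‖L v‖ ≤ 1}`. Extended by `∞ ↦ 0` it maps the compact set `(ℝ³ ∪ {∞}) \ interior Ω`
continuously and bijectively onto `L⁻¹` of the closed unit ball.
-/

/-- The slab `Ω_XY = [-1,7] × [-7,1] × [-1,1]`. -/
def ΩXY : Set (ℝ × ℝ × ℝ) :=
  Set.Icc (-1 : ℝ) 7 ×ˢ (Set.Icc (-7 : ℝ) 1 ×ˢ Set.Icc (-1 : ℝ) 1)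

/-- The slab `Ω_YZ = [-1,1] × [-1,7] × [-7,1]`. -/
def ΩYZ : Set (ℝ × ℝ × ℝ) :=
  Set.Icc (-1 : ℝ) 1 ×ˢ (Set.Icc (-1 : ℝ) 7 ×ˢ Set.Icc (-7 : ℝ) 1)

/-- The slab `Ω_ZX = [-7,1] × [-1,1] × [-1,7]`. -/
def ΩZX : Set (ℝ × ℝ × ℝ) :=
  Set.Icc (-7 : ℝ) 1 ×ˢ (Set.Icc (-1 : ℝ) 1 ×ˢ Set.Icc (-1 : ℝ) 7)

/-- The rectilinear region `Ω = Ω_XY ∪ Ω_YZ ∪ Ω_ZX`. -/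
def Ω : Set (ℝ × ℝ × ℝ) := ΩXY ∪ ΩYZ ∪ ΩZX

/-- The complement of the interior of `Ω` in the one-point compactification
`S³ = ℝ³ ∪ {∞}`. -/
def OmegaComplement : Set (OnePoint (ℝ × ℝ × ℝ)) :=
  ((fun v : ℝ × ℝ × ℝ => (v : OnePoint (ℝ × ℝ × ℝ))) '' interior Ω)ᶜ

open Set Filter Topology Bornology

/-- The properties of the gauge of a compact set that is star-shaped about an interior point `0`. -/
structure IsRadialGauge {E : Type*} [NormedAddCommGroup E] [NormedSpace ℝ E] (g : E → ℝ) :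
    Prop where
  continuous : Continuous g
  smul_of_nonneg : ∀ {t : ℝ}, 0 ≤ t → ∀ v, g (t • v) = t * g v
  exists_pos_mul_norm_le : ∃ c > 0, ∀ v, c * ‖v‖ ≤ g v

namespace IsRadialGauge

variable {E F : Type*} [NormedAddCommGroup E] [NormedSpace ℝ E]
  [NormedAddCommGroup F] [NormedSpace ℝ F] {g n : E → ℝ}

lemma apply_zero (hg : IsRadialGauge g) : g 0 = 0 := by
  simpa using hg.smul_of_nonneg le_rfl (0 : E)

lemma ne_zero_of_one_le (hg : IsRadialGauge g) {v : E} (hv : 1 ≤ g v) : v ≠ 0 := by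
  rintro rfl
  rw [hg.apply_zero] at hv
  exact zero_lt_one.not_ge hv

lemma pos (hg : IsRadialGauge g) {v : E} (hv : v ≠ 0) : 0 < g v := by
  obtain ⟨c, hc, hle⟩ := hg.exists_pos_mul_norm_le
  exact (mul_pos hc (norm_pos_iff.2 hv)).trans_le (hle v)

protected lemma min (hg : IsRadialGauge g) (hn : IsRadialGauge n) :
    IsRadialGauge fun v ↦ min (g v) (n v) where
  continuous := hg.continuous.min hn.continuous
  smul_of_nonneg ht v := by
    rw [hg.smul_of_nonneg ht, hn.smul_of_nonneg ht, mul_min_of_nonneg _ _ ht]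
  exists_pos_mul_norm_le := by
    obtain ⟨c, hc, hgc⟩ := hg.exists_pos_mul_norm_le
    obtain ⟨d, hd, hnd⟩ := hn.exists_pos_mul_norm_le
    refine ⟨min c d, lt_min hc hd, fun v ↦ le_min ?_ ?_⟩
    · exact (mul_le_mul_of_nonneg_right (min_le_left c d) (norm_nonneg v)).trans (hgc v)
    · exact (mul_le_mul_of_nonneg_right (min_le_right c d) (norm_nonneg v)).trans (hnd v)

lemma norm_comp (L : E ≃L[ℝ] F) : IsRadialGauge fun v ↦ ‖L v‖ where
  continuous := by fun_prop
  smul_of_nonneg ht v := by rw [map_smul, norm_smul, Real.norm_of_nonneg ht]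
  exists_pos_mul_norm_le := antilipschitzWith_iff_exists_mul_le_norm.1 ⟨_, L.antilipschitz⟩

lemma interior_setOf_le_one (hg : IsRadialGauge g) :
    interior {v | g v ≤ 1} = {v | g v < 1} := by
  refine Subset.antisymm (fun v hv ↦ ?_)
    (interior_maximal (fun v (hv : g v < 1) ↦ hv.le) (isOpen_lt hg.continuous continuous_const))
  have hscale : Tendsto (fun t : ℝ ↦ t • v) (𝓝[>] 1) (𝓝 v) := by
    have : Continuous fun t : ℝ ↦ t • v := by fun_prop
    simpa using (this.tendsto 1).mono_left nhdsWithin_le_nhds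
  -- some `t • v` with `t > 1` still lies in `{g ≤ 1}`
  obtain ⟨t, htv_mem, ht⟩ :=
    ((hscale.eventually (isOpen_interior.mem_nhds hv)).and self_mem_nhdsWithin).exists
  have htv : t * g v ≤ 1 := by
    simpa [hg.smul_of_nonneg (zero_le_one.trans ht.le)] using interior_subset htv_mem
  show g v < 1
  by_contra! hv1
  nlinarith [ht]

lemma tendsto_cocompact_atTop [ProperSpace E] (hg : IsRadialGauge g) :
    Tendsto g (cocompact E) atTop := by
  obtain ⟨c, hc, hle⟩ := hg.exists_pos_mul_norm_le
  exact tendsto_atTop_mono hle (tendsto_norm_cocompact_atTop.const_mul_atTop hc)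

lemma tendsto_nhds_zero_of_comp {α : Type*} {l : Filter α} {f : α → E} (hg : IsRadialGauge g)
    (h : Tendsto (g ∘ f) l (𝓝 0)) : Tendsto f l (𝓝 0) := by
  obtain ⟨c, hc, hle⟩ := hg.exists_pos_mul_norm_le
  refine squeeze_zero_norm (fun a ↦ ?_) (by simpa using h.const_mul c⁻¹)
  rw [le_inv_mul_iff₀ hc]
  exact hle (f a)

end IsRadialGauge

section RadialInversion

variable {E : Type*} [NormedAddCommGroup E] [NormedSpace ℝ E] {n g : E → ℝ}

noncomputable def radialInversion (n g : E → ℝ) (v : E) : E := (n v * g v)⁻¹ • v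

lemma radialInversion_comm : radialInversion n g = radialInversion g n := by
  ext1 v
  rw [radialInversion, radialInversion, mul_comm]

lemma radialInversion_ne_zero (hn : IsRadialGauge n) (hg : IsRadialGauge g) {v : E}
    (hv : v ≠ 0) : radialInversion n g v ≠ 0 :=
  smul_ne_zero (inv_ne_zero (mul_pos (hn.pos hv) (hg.pos hv)).ne') hv

lemma apply_radialInversion (hn : IsRadialGauge n) (hg : IsRadialGauge g) {v : E}
    (hv : v ≠ 0) : n (radialInversion n g v) = (g v)⁻¹ := by
  have hnv := (hn.pos hv).ne'
  rw [radialInversion, hn.smul_of_nonneg (inv_nonneg.2 (mul_pos (hn.pos hv) (hg.pos hv)).le)]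
  field_simp

lemma apply_radialInversion' (hn : IsRadialGauge n) (hg : IsRadialGauge g) {v : E}
    (hv : v ≠ 0) : g (radialInversion n g v) = (n v)⁻¹ := by
  rw [radialInversion_comm]
  exact apply_radialInversion hg hn hv

lemma radialInversion_radialInversion (hn : IsRadialGauge n) (hg : IsRadialGauge g) {v : E}
    (hv : v ≠ 0) : radialInversion n g (radialInversion n g v) = v := by
  conv_lhs => rw [radialInversion, apply_radialInversion hn hg hv,
    apply_radialInversion' hn hg hv, radialInversion, smul_smul]
  have hnv := (hn.pos hv).ne'
  have hgv := (hg.pos hv).ne'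
  rw [show ((g v)⁻¹ * (n v)⁻¹)⁻¹ * (n v * g v)⁻¹ = 1 by field_simp, one_smul]

lemma continuousAt_radialInversion (hn : IsRadialGauge n) (hg : IsRadialGauge g) {v : E}
    (hv : v ≠ 0) : ContinuousAt (radialInversion n g) v :=
  (((hn.continuous.mul hg.continuous).continuousAt.inv₀
    (mul_pos (hn.pos hv) (hg.pos hv)).ne').smul continuousAt_id)

lemma tendsto_radialInversion_cocompact [ProperSpace E] (hn : IsRadialGauge n)
    (hg : IsRadialGauge g) : Tendsto (radialInversion n g) (cocompact E) (𝓝 0) := by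
  refine hn.tendsto_nhds_zero_of_comp ?_
  have hne : ∀ᶠ v in cocompact E, v ≠ 0 := by
    filter_upwards [hg.tendsto_cocompact_atTop.eventually_gt_atTop 0] with v hv
    rintro rfl
    exact hv.ne' hg.apply_zero
  refine (tendsto_inv_atTop_zero.comp hg.tendsto_cocompact_atTop).congr' ?_
  filter_upwards [hne] with v hv
  exact (apply_radialInversion hn hg hv).symm

end RadialInversion

section OnePointInversion

variable {E : Type*} [NormedAddCommGroup E] [NormedSpace ℝ E] {n g : E → ℝ}

noncomputable def onePointRadialInversion (n g : E → ℝ) (p : OnePoint E) : E :=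
  p.elim 0 (radialInversion n g)

lemma mapsTo_onePointRadialInversion (hn : IsRadialGauge n) (hg : IsRadialGauge g) :
    MapsTo (onePointRadialInversion n g) ((↑) '' {v | g v < 1})ᶜ {v | n v ≤ 1} := by
  intro p hp
  cases p with
  | infty => simp [onePointRadialInversion, hn.apply_zero]
  | coe v =>
    have hv : 1 ≤ g v := by simpa using hp
    rw [mem_ofPred_eq, onePointRadialInversion, OnePoint.elim_some,
      apply_radialInversion hn hg (hg.ne_zero_of_one_le hv)]
    exact inv_le_one_of_one_le₀ hv

lemma injOn_onePointRadialInversion (hn : IsRadialGauge n) (hg : IsRadialGauge g) :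
    InjOn (onePointRadialInversion n g) ((↑) '' {v | g v < 1})ᶜ := by
  intro p hp q hq hpq
  cases p with
  | infty =>
    cases q with
    | infty => rfl
    | coe w =>
      have hw : 1 ≤ g w := by simpa using hq
      exact absurd hpq.symm (radialInversion_ne_zero hn hg (hg.ne_zero_of_one_le hw))
  | coe v =>
    have hv : v ≠ 0 := hg.ne_zero_of_one_le (by simpa using hp)
    cases q with
    | infty => exact absurd hpq (radialInversion_ne_zero hn hg hv)
    | coe w =>
      have hw : w ≠ 0 := hg.ne_zero_of_one_le (by simpa using hq)
      have hvw : radialInversion n g v = radialInversion n g w := hpq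
      rw [← radialInversion_radialInversion hn hg hv, hvw,
        radialInversion_radialInversion hn hg hw]

lemma surjOn_onePointRadialInversion (hn : IsRadialGauge n) (hg : IsRadialGauge g) :
    SurjOn (onePointRadialInversion n g) ((↑) '' {v | g v < 1})ᶜ {v | n v ≤ 1} := by
  intro w (hw : n w ≤ 1)
  rcases eq_or_ne w 0 with rfl | hw0
  · exact ⟨OnePoint.infty, OnePoint.infty_notMem_image_coe, rfl⟩
  · refine ⟨(radialInversion n g w : E), ?_, radialInversion_radialInversion hn hg hw0⟩
    have : 1 ≤ g (radialInversion n g w) := by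
      rw [apply_radialInversion' hn hg hw0]
      exact one_le_inv₀ (hn.pos hw0) |>.2 hw
    simpa using this

lemma continuousOn_onePointRadialInversion [ProperSpace E] (hn : IsRadialGauge n)
    (hg : IsRadialGauge g) :
    ContinuousOn (onePointRadialInversion n g) ((↑) '' {v | g v < 1})ᶜ := by
  intro p hp
  refine ContinuousAt.continuousWithinAt ?_
  cases p with
  | infty =>
    rw [OnePoint.continuousAt_infty', coclosedCompact_eq_cocompact]
    exact tendsto_radialInversion_cocompact hn hg
  | coe v =>
    rw [OnePoint.continuousAt_coe]
    exact continuousAt_radialInversion hn hg (hg.ne_zero_of_one_le (by simpa using hp))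

noncomputable def IsRadialGauge.onePointComplHomeomorph [ProperSpace E] (hn : IsRadialGauge n)
    (hg : IsRadialGauge g) :
    (((↑) '' {v | g v < 1})ᶜ : Set (OnePoint E)) ≃ₜ {v | n v ≤ 1} :=
  have : CompactSpace (((↑) '' {v | g v < 1})ᶜ : Set (OnePoint E)) :=
    isCompact_iff_compactSpace.1 (isClosed_compl_iff.2 <|
      OnePoint.isOpen_image_coe.2 (isOpen_lt hg.continuous continuous_const)).isCompact
  Continuous.homeoOfEquivCompactToT2
    (f := BijOn.equiv _ ⟨mapsTo_onePointRadialInversion hn hg,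
      injOn_onePointRadialInversion hn hg, surjOn_onePointRadialInversion hn hg⟩)
    ((continuousOn_onePointRadialInversion hn hg).mapsToRestrict
      (mapsTo_onePointRadialInversion hn hg))

end OnePointInversion

structure IsConvexBody {E : Type*} [NormedAddCommGroup E] [NormedSpace ℝ E] (s : Set E) :
    Prop where
  convex : Convex ℝ s
  isClosed : IsClosed s
  isBounded : IsBounded s
  mem_nhds_zero : s ∈ 𝓝 0

lemma isConvexBody_Icc {a b : ℝ} (ha : a < 0) (hb : 0 < b) : IsConvexBody (Icc a b) :=
  ⟨convex_Icc a b, isClosed_Icc, Metric.isBounded_Icc a b, Icc_mem_nhds ha hb⟩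

namespace IsConvexBody

variable {E F : Type*} [NormedAddCommGroup E] [NormedSpace ℝ E]
  [NormedAddCommGroup F] [NormedSpace ℝ F] {s : Set E} {t : Set F}

protected lemma prod (hs : IsConvexBody s) (ht : IsConvexBody t) : IsConvexBody (s ×ˢ t) :=
  ⟨hs.convex.prod ht.convex, hs.isClosed.prod ht.isClosed, hs.isBounded.prod ht.isBounded,
    prod_mem_nhds hs.mem_nhds_zero ht.mem_nhds_zero⟩

lemma isRadialGauge_gauge (hs : IsConvexBody s) : IsRadialGauge (gauge s) where
  continuous := continuous_gauge hs.convex hs.mem_nhds_zero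
  smul_of_nonneg ht v := gauge_smul_of_nonneg ht v
  exists_pos_mul_norm_le := by
    obtain ⟨r, hr, hsr⟩ := hs.isBounded.subset_closedBall_lt 0 0
    refine ⟨r⁻¹, inv_pos.2 hr, fun v ↦ ?_⟩
    rw [inv_mul_eq_div]
    exact le_gauge_of_subset_closedBall (absorbent_nhds_zero hs.mem_nhds_zero) hr.le hsr

lemma setOf_gauge_le_one (hs : IsConvexBody s) : {v | gauge s v ≤ 1} = s := by
  ext v
  rw [mem_ofPred_eq, gauge_le_one_iff_mem_closure hs.convex hs.mem_nhds_zero,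
    hs.isClosed.closure_eq]

end IsConvexBody

lemma isConvexBody_slabs : IsConvexBody ΩXY ∧ IsConvexBody ΩYZ ∧ IsConvexBody ΩZX := by
  refine ⟨?_, ?_, ?_⟩ <;>
  exact (isConvexBody_Icc (by norm_num) (by norm_num)).prod
    ((isConvexBody_Icc (by norm_num) (by norm_num)).prod
      (isConvexBody_Icc (by norm_num) (by norm_num)))

noncomputable def gaugeΩ (v : ℝ × ℝ × ℝ) : ℝ :=
  min (gauge ΩXY v) (min (gauge ΩYZ v) (gauge ΩZX v))

lemma isRadialGauge_gaugeΩ : IsRadialGauge gaugeΩ := by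
  obtain ⟨hXY, hYZ, hZX⟩ := isConvexBody_slabs
  exact hXY.isRadialGauge_gauge.min (hYZ.isRadialGauge_gauge.min hZX.isRadialGauge_gauge)

lemma Ω_eq_setOf_gaugeΩ_le_one : Ω = {v | gaugeΩ v ≤ 1} := by
  obtain ⟨hXY, hYZ, hZX⟩ := isConvexBody_slabs
  simp only [gaugeΩ, min_le_iff, ofPred_or, hXY.setOf_gauge_le_one, hYZ.setOf_gauge_le_one,
    hZX.setOf_gauge_le_one, Ω, union_assoc]

/-- the complement of `Ω` in the 3-sphere is also a topological
ball: `(ℝ³ ∪ {∞}) \ interior Ω` is homeomorphic to the closed unit ball of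
`ℝ³`. -/
theorem Omega_complement_homeomorph_ball :
    Nonempty (OmegaComplement ≃ₜ
      (Metric.closedBall (0 : EuclideanSpace ℝ (Fin 3)) 1)) := by
  obtain ⟨L⟩ : Nonempty ((ℝ × ℝ × ℝ) ≃L[ℝ] EuclideanSpace ℝ (Fin 3)) :=
    FiniteDimensional.nonempty_continuousLinearEquiv_of_finrank_eq (by simp)
  have hinterior : interior Ω = {v | gaugeΩ v < 1} := by
    rw [Ω_eq_setOf_gaugeΩ_le_one, isRadialGauge_gaugeΩ.interior_setOf_le_one]
  exact ⟨(Homeomorph.setCongr (by rw [OmegaComplement, hinterior])).trans <|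
    ((IsRadialGauge.norm_comp L).onePointComplHomeomorph isRadialGauge_gaugeΩ).trans <|
      L.toHomeomorph.subtype fun v ↦ by simp⟩
end
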